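/- arXiv:1807.00356 — 8 statements merged into one kernel-verified Lean document; each statement's English description precedes it below -/
import Mathlib

section
/- Let n ≥ 1 be an integer and s ≥ 2n a real number. For any sequence (u_k)_{k≥0} of nonnegative reals with Σ u_k²/(k+1) < ∞, one has Σ_{k=0}^∞ u_k u_{k+n} / ((k+n+1)(k+1+s/2)(k+n+1+s/2)) ≤ Σ_{k=0}^{n−1} u_k²/(n²(k+n+1)) + Σ_{k=n}^∞ u_k²/((k+1)²(k+n+1)). -/
open Finset

set_option maxHeartbeats 1000000 in

/-- For `n ≥ 1`, real `s ≥ 2n`, and a nonnegative sequence `u` with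
`Σ u_k²/(k+1) < ∞`, one has
`Σ_{k≥0} u_k u_{k+n}/((k+n+1)(k+1+s/2)(k+n+1+s/2))
  ≤ Σ_{k=0}^{n−1} u_k²/(n²(k+n+1)) + Σ_{k≥n} u_k²/((k+1)²(k+n+1))`. -/
theorem stmt6 (n : ℕ) (hn : 1 ≤ n) (s : ℝ) (hs : 2 * n ≤ s)
    (u : ℕ → ℝ) (hu : ∀ k, 0 ≤ u k)
    (hsum : Summable (fun k : ℕ => u k ^ 2 / ((k : ℝ) + 1))) :
    ∑' k : ℕ, u k * u (k + n) /
        (((k : ℝ) + n + 1) * ((k : ℝ) + 1 + s / 2) * ((k : ℝ) + n + 1 + s / 2))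
      ≤ (∑ k ∈ range n, u k ^ 2 / ((n : ℝ) ^ 2 * ((k : ℝ) + n + 1)))
        + ∑' k : ℕ, u (k + n) ^ 2 /
            (((k : ℝ) + n + 1) ^ 2 * ((k : ℝ) + n + n + 1)) := by
  have hn1 : (1 : ℝ) ≤ (n : ℝ) := by exact_mod_cast hn
  have hsn : (n : ℝ) ≤ s / 2 := by linarith
  set A : ℕ → ℝ := fun k => u k * u (k + n) /
        (((k : ℝ) + n + 1) * ((k : ℝ) + 1 + s / 2) * ((k : ℝ) + n + 1 + s / 2)) with hAdef
  set B : ℕ → ℝ := fun k => u (k + n) ^ 2 /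
            (((k : ℝ) + n + 1) ^ 2 * ((k : ℝ) + n + n + 1)) with hBdef
  set C : ℕ → ℝ := fun k => u k ^ 2 /
            (((k : ℝ) + n + 1) ^ 2 * ((k : ℝ) + n + n + 1)) with hCdef
  have hk0 : ∀ k : ℕ, (0 : ℝ) ≤ (k : ℝ) := fun k => Nat.cast_nonneg k
  have hk1 : ∀ k : ℕ, (0 : ℝ) < (k : ℝ) + n + 1 := fun k => by
    have := hk0 k; linarith
  have hk2 : ∀ k : ℕ, (0 : ℝ) < (k : ℝ) + n + n + 1 := fun k => by
    have := hk0 k; linarith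
  have hBnonneg : ∀ k, 0 ≤ B k := fun k => by
    simp only [hBdef]
    have := hu (k + n); have := hk1 k; have := hk2 k; positivity
  have hCnonneg : ∀ k, 0 ≤ C k := fun k => by
    simp only [hCdef]
    have := hu k; have := hk1 k; have := hk2 k; positivity
  have hAnonneg : ∀ k, 0 ≤ A k := fun k => by
    simp only [hAdef]
    have h1 := hu k; have h2 := hu (k + n)
    have h3 : (0 : ℝ) < (k : ℝ) + 1 + s / 2 := by have := hk0 k; linarith
    have h4 : (0 : ℝ) < (k : ℝ) + n + 1 + s / 2 := by have := hk1 k; linarith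
    have := hk1 k; positivity
  -- shifted summability
  have hushift : Summable (fun k : ℕ => u (k + n) ^ 2 / ((k : ℝ) + n + 1)) := by
    have h := (summable_nat_add_iff n).mpr hsum
    refine h.congr fun k => ?_
    push_cast; ring_nf
  have hBsum : Summable B := by
    refine hushift.of_nonneg_of_le hBnonneg fun k => ?_
    simp only [hBdef]
    refine div_le_div_of_nonneg_left (by positivity) (hk1 k) ?_
    have h1 := hk1 k; have h2 := hk2 k; have hx1 : (1 : ℝ) ≤ (k : ℝ) + n + 1 := by
      have := hk0 k; linarith
    have hy1 : (1 : ℝ) ≤ (k : ℝ) + n + n + 1 := by have := hk0 k; linarith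
    nlinarith
  have hCsum : Summable C := by
    refine hsum.of_nonneg_of_le hCnonneg fun k => ?_
    simp only [hCdef]
    refine div_le_div_of_nonneg_left (by positivity) (by have := hk0 k; linarith) ?_
    have h1 := hk1 k; have h2 := hk2 k
    have hx1 : (1 : ℝ) ≤ (k : ℝ) + n + 1 := by have := hk0 k; linarith
    have hy1 : (1 : ℝ) ≤ (k : ℝ) + n + n + 1 := by have := hk0 k; linarith
    nlinarith
  -- key termwise bound
  have hAle : ∀ k, A k ≤ (C k + B k) / 2 := by
    intro k
    have h1 := hk1 k; have h2 := hk2 k; have h0 := hk0 k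
    have h3 : (0 : ℝ) < (k : ℝ) + 1 + s / 2 := by linarith
    have h4 : (0 : ℝ) < (k : ℝ) + n + 1 + s / 2 := by linarith
    have hu1 := hu k; have hu2 := hu (k + n)
    have hE : ((k : ℝ) + n + 1) ^ 2 * ((k : ℝ) + n + n + 1) ≤
        ((k : ℝ) + n + 1) * ((k : ℝ) + 1 + s / 2) * ((k : ℝ) + n + 1 + s / 2) := by
      have ha : (k : ℝ) + n + 1 ≤ (k : ℝ) + 1 + s / 2 := by linarith
      have hb : (k : ℝ) + n + n + 1 ≤ (k : ℝ) + n + 1 + s / 2 := by linarith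
      have hmm : ((k : ℝ) + n + 1) * ((k : ℝ) + n + n + 1) ≤
          ((k : ℝ) + 1 + s / 2) * ((k : ℝ) + n + 1 + s / 2) :=
        mul_le_mul ha hb (le_of_lt h2) (le_of_lt h3)
      nlinarith [mul_le_mul_of_nonneg_left hmm (le_of_lt h1)]
    have hstep1 : A k ≤ u k * u (k + n) /
        (((k : ℝ) + n + 1) ^ 2 * ((k : ℝ) + n + n + 1)) := by
      simp only [hAdef]
      exact div_le_div_of_nonneg_left (mul_nonneg hu1 hu2) (by positivity) hE
    have hAG : u k * u (k + n) ≤ (u k ^ 2 + u (k + n) ^ 2) / 2 := by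
      nlinarith [sq_nonneg (u k - u (k + n))]
    calc A k ≤ u k * u (k + n) / (((k : ℝ) + n + 1) ^ 2 * ((k : ℝ) + n + n + 1)) := hstep1
      _ ≤ ((u k ^ 2 + u (k + n) ^ 2) / 2) /
          (((k : ℝ) + n + 1) ^ 2 * ((k : ℝ) + n + n + 1)) := by
            exact (div_le_div_iff_of_pos_right (by positivity)).mpr hAG
      _ = (C k + B k) / 2 := by simp only [hCdef, hBdef]; ring
  have hAsum : Summable A := by
    refine Summable.of_nonneg_of_le hAnonneg hAle ?_
    exact ((hCsum.add hBsum).div_const 2)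
  have hstep : ∑' k, A k ≤ (∑' k, C k + ∑' k, B k) / 2 := by
    calc ∑' k, A k ≤ ∑' k, (C k + B k) / 2 :=
          Summable.tsum_le_tsum hAle hAsum ((hCsum.add hBsum).div_const 2)
      _ = (∑' k, C k + ∑' k, B k) / 2 := by
          rw [tsum_div_const, Summable.tsum_add hCsum hBsum]
  -- split C
  set F : ℝ := ∑ k ∈ range n, u k ^ 2 / ((n : ℝ) ^ 2 * ((k : ℝ) + n + 1)) with hFdef
  have hCsplit : ∑ k ∈ range n, C k + ∑' k, C (k + n) = ∑' k, C k :=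
    Summable.sum_add_tsum_nat_add n hCsum
  have hhead : ∑ k ∈ range n, C k ≤ 2 * F := by
    rw [hFdef, mul_sum]
    refine sum_le_sum fun k _ => ?_
    have h1 := hk1 k; have h2 := hk2 k; have h0 := hk0 k
    calc C k = u k ^ 2 * (1 / (((k : ℝ) + n + 1) ^ 2 * ((k : ℝ) + n + n + 1))) := by
          simp only [hCdef]; ring
      _ ≤ u k ^ 2 * (2 / ((n : ℝ) ^ 2 * ((k : ℝ) + n + 1))) := by
          refine mul_le_mul_of_nonneg_left ?_ (sq_nonneg _)
          rw [div_le_div_iff₀ (by positivity) (by positivity)]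
          have hsq : (n : ℝ) ^ 2 ≤ ((k : ℝ) + n + 1) ^ 2 := by nlinarith
          nlinarith [mul_le_mul_of_nonneg_right hsq (le_of_lt h1)]
      _ = 2 * (u k ^ 2 / ((n : ℝ) ^ 2 * ((k : ℝ) + n + 1))) := by ring
  have htail : ∑' k, C (k + n) ≤ ∑' k, B k := by
    refine Summable.tsum_le_tsum (fun k => ?_) ((summable_nat_add_iff n).mpr hCsum) hBsum
    simp only [hCdef, hBdef]
    push_cast
    have h1 := hk1 k; have h2 := hk2 k; have h0 := hk0 k
    refine div_le_div_of_nonneg_left (sq_nonneg _) (by positivity) ?_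
    have hsq : ((k : ℝ) + n + 1) ^ 2 ≤ ((k : ℝ) + n + n + 1) ^ 2 := by nlinarith
    have := mul_le_mul hsq (by linarith : (k : ℝ) + n + n + 1 ≤ (k : ℝ) + n + n + n + 1)
      (le_of_lt h2) (by positivity)
    linarith [this]
  have hCbound : ∑' k, C k ≤ 2 * F + ∑' k, B k := by
    rw [← hCsplit]; linarith
  linarith
end

section
/- Let n ≥ 1 be an integer and s > 0 a real number, and let C be a nonnegative real with C ≤ n/s. Assume s ≥ 2n. Then for every sequence (u_k)_{k≥0} of nonnegative reals with Σ u_k²/(k+1) < ∞, the inequality Σ_{k=0}^{n−1} u_k²/(k+n+1) + Σ_{k=n}^∞ n² u_k²/((k+1)²(k+n+1)) ≥ 4snC Σ_{k=0}^∞ u_k u_{k+n}/((k+n+1)(2k+2n+s+2)(2k+s+2)) holds. -/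
open Finset

set_option maxHeartbeats 1000000 in
/-- Pointwise key inequality (AM-GM with weight `t = (K+nn+1)/m`). -/
lemma key_ineq (K nn s C m a b : ℝ) (hK : 0 ≤ K) (hn : 1 ≤ nn) (hs : 2 * nn ≤ s)
    (hC0 : 0 ≤ C) (hc : C * s ≤ nn) (hm1 : 1 ≤ m) (hm : 2 * m ≤ 2 * K + s + 2)
    (ha : 0 ≤ a) (hb : 0 ≤ b) :
    4 * s * nn * C * (a * b / ((K + nn + 1) * (2 * K + 2 * nn + s + 2) * (2 * K + s + 2)))
      ≤ (nn ^ 2 * a ^ 2 / (m ^ 2 * (K + nn + 1))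
          + nn ^ 2 * b ^ 2 / ((K + nn + 1) ^ 2 * (K + 2 * nn + 1))) / 2 := by
  have hs0 : 0 < s := by linarith
  have h1 : (0:ℝ) < K + nn + 1 := by linarith
  have h2 : (0:ℝ) < 2 * K + 2 * nn + s + 2 := by linarith
  have h3 : (0:ℝ) < 2 * K + s + 2 := by linarith
  have h4 : (0:ℝ) < K + 2 * nn + 1 := by linarith
  have hm0 : (0:ℝ) < m := by linarith
  have hD : (0:ℝ) < (K + nn + 1) * (2 * K + 2 * nn + s + 2) * (2 * K + s + 2) := by positivity
  have hAm : 2 * (a * b) * (m * (K + nn + 1)) ≤ (K + nn + 1) ^ 2 * a ^ 2 + m ^ 2 * b ^ 2 := by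
    nlinarith [sq_nonneg ((K + nn + 1) * a - m * b)]
  have hA : 4 * m * (K + nn + 1) ≤ (2 * K + 2 * nn + s + 2) * (2 * K + s + 2) := by
    nlinarith [mul_le_mul hm (show 2 * (K + nn + 1) ≤ 2 * K + 2 * nn + s + 2 by linarith)
      (by linarith) (le_of_lt h3)]
  have hB : 4 * m * (K + 2 * nn + 1) ≤ (2 * K + 2 * nn + s + 2) * (2 * K + s + 2) := by
    nlinarith [mul_le_mul hm (show 2 * (K + 2 * nn + 1) ≤ 2 * K + 2 * nn + s + 2 by linarith)
      (by linarith) (le_of_lt h3)]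
  have hT1 := mul_le_mul_of_nonneg_right hAm
    (show (0:ℝ) ≤ 4 * nn ^ 2 * m * (K + nn + 1) ^ 2 * (K + 2 * nn + 1) by positivity)
  have hT2 := mul_le_mul_of_nonneg_left hA
    (show (0:ℝ) ≤ nn ^ 2 * a ^ 2 * (K + nn + 1) ^ 3 * (K + 2 * nn + 1) by positivity)
  have hT3 := mul_le_mul_of_nonneg_left hB
    (show (0:ℝ) ≤ nn ^ 2 * b ^ 2 * m ^ 2 * (K + nn + 1) ^ 2 by positivity)
  have hmain : 8 * nn ^ 2 * (a * b) * (m ^ 2 * (K + nn + 1) ^ 3 * (K + 2 * nn + 1))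
      ≤ (nn ^ 2 * a ^ 2 * ((K + nn + 1) ^ 2 * (K + 2 * nn + 1))
          + nn ^ 2 * b ^ 2 * (m ^ 2 * (K + nn + 1)))
        * ((K + nn + 1) * (2 * K + 2 * nn + s + 2) * (2 * K + s + 2)) := by
    linarith [hT1, hT2, hT3]
  have hstep : 4 * s * nn * C *
      (a * b / ((K + nn + 1) * (2 * K + 2 * nn + s + 2) * (2 * K + s + 2)))
      ≤ 4 * nn ^ 2 * (a * b / ((K + nn + 1) * (2 * K + 2 * nn + s + 2) * (2 * K + s + 2))) := by
    have hx : (0:ℝ) ≤ a * b / ((K + nn + 1) * (2 * K + 2 * nn + s + 2) * (2 * K + s + 2)) :=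
      div_nonneg (mul_nonneg ha hb) (le_of_lt hD)
    linarith [mul_le_mul_of_nonneg_right (show 4 * s * nn * C ≤ 4 * nn ^ 2 by nlinarith) hx]
  refine le_trans hstep ?_
  have hE1 : (0:ℝ) < m ^ 2 * (K + nn + 1) := by positivity
  have hE2 : (0:ℝ) < (K + nn + 1) ^ 2 * (K + 2 * nn + 1) := by positivity
  rw [div_add_div _ _ (ne_of_gt hE1) (ne_of_gt hE2), div_div,
    show 4 * nn ^ 2 * (a * b / ((K + nn + 1) * (2 * K + 2 * nn + s + 2) * (2 * K + s + 2)))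
      = 4 * nn ^ 2 * (a * b) / ((K + nn + 1) * (2 * K + 2 * nn + s + 2) * (2 * K + s + 2)) by ring,
    div_le_div_iff₀ hD (by positivity)]
  linarith [hmain]

/-- For `n ≥ 1`, real `s ≥ 2n` (in particular `s > 0`), and `0 ≤ C ≤ n/s`, every
nonnegative sequence `u` with `Σ u_k²/(k+1) < ∞` satisfies
`Σ_{k=0}^{n−1} u_k²/(k+n+1) + Σ_{k≥n} n² u_k²/((k+1)²(k+n+1))
  ≥ 4snC Σ_{k≥0} u_k u_{k+n}/((k+n+1)(2k+2n+s+2)(2k+s+2))`. -/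
theorem stmt7 (n : ℕ) (hn : 1 ≤ n) (s : ℝ) (hs0 : 0 < s) (hs : 2 * n ≤ s)
    (C : ℝ) (hC0 : 0 ≤ C) (hC : C ≤ n / s)
    (u : ℕ → ℝ) (hu : ∀ k, 0 ≤ u k)
    (hsum : Summable (fun k : ℕ => u k ^ 2 / ((k : ℝ) + 1))) :
    (∑ k ∈ range n, u k ^ 2 / ((k : ℝ) + n + 1))
      + ∑' k : ℕ, (n : ℝ) ^ 2 * u (k + n) ^ 2 /
          (((k : ℝ) + n + 1) ^ 2 * ((k : ℝ) + n + n + 1))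
    ≥ 4 * s * n * C * ∑' k : ℕ, u k * u (k + n) /
        (((k : ℝ) + n + 1) * (2 * k + 2 * n + s + 2) * (2 * k + s + 2)) := by
  have hn1 : (1:ℝ) ≤ (n:ℝ) := by exact_mod_cast hn
  have hcs : C * s ≤ (n:ℝ) := (le_div_iff₀ hs0).1 hC
  set F : ℕ → ℝ := fun k =>
    (n:ℝ) ^ 2 * u k ^ 2 / ((max ((k:ℝ) + 1) (n:ℝ)) ^ 2 * ((k:ℝ) + n + 1)) with hFdef
  have hF_nonneg : ∀ k, 0 ≤ F k := by
    intro k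
    have hmx : (0:ℝ) < max ((k:ℝ) + 1) (n:ℝ) := lt_of_lt_of_le (by linarith) (le_max_right _ _)
    have hden : (0:ℝ) < (max ((k:ℝ) + 1) (n:ℝ)) ^ 2 * ((k:ℝ) + n + 1) := by positivity
    exact div_nonneg (by positivity) (le_of_lt hden)
  have hF_le : ∀ k, F k ≤ u k ^ 2 / ((k:ℝ) + 1) := by
    intro k
    have hk0 : (0:ℝ) ≤ (k:ℝ) := Nat.cast_nonneg k
    have hmx : (n:ℝ) ≤ max ((k:ℝ) + 1) (n:ℝ) := le_max_right _ _
    have hmx0 : (0:ℝ) < max ((k:ℝ) + 1) (n:ℝ) := lt_of_lt_of_le (by linarith) hmx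
    have h1 : (0:ℝ) < (k:ℝ) + 1 := by linarith
    rw [div_le_div_iff₀ (by positivity) h1]
    have hmx1 : (k:ℝ) + 1 ≤ max ((k:ℝ) + 1) (n:ℝ) := le_max_left _ _
    have hstep : (n:ℝ) ^ 2 * ((k:ℝ) + 1) ≤ (max ((k:ℝ) + 1) (n:ℝ)) ^ 2 * ((k:ℝ) + n + 1) := by
      have h2 : (n:ℝ) * (n:ℝ) ≤ (max ((k:ℝ) + 1) (n:ℝ)) * (max ((k:ℝ) + 1) (n:ℝ)) :=
        mul_le_mul hmx hmx (by linarith) (le_of_lt hmx0)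
      nlinarith [sq_nonneg (max ((k:ℝ) + 1) (n:ℝ))]
    nlinarith [mul_le_mul_of_nonneg_left hstep (sq_nonneg (u k))]
  have hF_summable : Summable F := Summable.of_nonneg_of_le hF_nonneg hF_le hsum
  have hFshift_summable : Summable (fun k => F (k + n)) :=
    (summable_nat_add_iff n).2 hF_summable
  have hFshift : ∀ k : ℕ, F (k + n) = (n:ℝ) ^ 2 * u (k + n) ^ 2 /
      (((k:ℝ) + n + 1) ^ 2 * ((k:ℝ) + n + n + 1)) := by
    intro k
    have hcast : ((k + n : ℕ) : ℝ) = (k:ℝ) + n := by push_cast; ring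
    have hk0 : (0:ℝ) ≤ (k:ℝ) := Nat.cast_nonneg k
    simp only [hFdef]
    rw [hcast, max_eq_left (by linarith : (n:ℝ) ≤ (k:ℝ) + n + 1)]
  have hFsmall : ∀ k ∈ range n, u k ^ 2 / ((k:ℝ) + n + 1) = F k := by
    intro k hk
    have hk' : (k:ℝ) + 1 ≤ (n:ℝ) := by exact_mod_cast Nat.succ_le_of_lt (mem_range.1 hk)
    have hmx : max ((k:ℝ) + 1) (n:ℝ) = (n:ℝ) := max_eq_right hk'
    simp only [hFdef, hmx]
    rw [mul_comm ((n:ℝ)^2) (u k ^ 2), mul_div_assoc, ← div_div, div_self (by positivity : ((n:ℝ)^2) ≠ 0)]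
    ring
  set g : ℕ → ℝ := fun k => 4 * s * n * C * (u k * u (k + n) /
      (((k:ℝ) + n + 1) * (2 * k + 2 * n + s + 2) * (2 * k + s + 2))) with hgdef
  have hkey : ∀ k : ℕ, g k ≤ (F k + F (k + n)) / 2 := by
    intro k
    have hk0 : (0:ℝ) ≤ (k:ℝ) := Nat.cast_nonneg k
    have h := key_ineq (k:ℝ) (n:ℝ) s C (max ((k:ℝ) + 1) (n:ℝ)) (u k) (u (k + n))
      hk0 hn1 hs hC0 hcs (le_trans (by linarith) (le_max_left _ _))
      (by rcases max_cases ((k:ℝ) + 1) (n:ℝ) with ⟨h1, _⟩ | ⟨h1, _⟩ <;> rw [h1] <;> linarith)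
      (hu k) (hu (k + n))
    calc g k ≤ ((n:ℝ) ^ 2 * u k ^ 2 / ((max ((k:ℝ) + 1) (n:ℝ)) ^ 2 * ((k:ℝ) + n + 1))
          + (n:ℝ) ^ 2 * u (k + n) ^ 2 / (((k:ℝ) + n + 1) ^ 2 * ((k:ℝ) + 2 * n + 1))) / 2 := h
      _ = (F k + F (k + n)) / 2 := by
          rw [hFshift k]
          simp only [hFdef]
          ring
  have hg_nonneg : ∀ k, 0 ≤ g k := by
    intro k
    have hk0 : (0:ℝ) ≤ (k:ℝ) := Nat.cast_nonneg k
    have hD : (0:ℝ) < ((k:ℝ) + n + 1) * (2 * k + 2 * n + s + 2) * (2 * k + s + 2) := by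
      have : (0:ℝ) < (k:ℝ) + n + 1 := by linarith
      have : (0:ℝ) < 2 * (k:ℝ) + 2 * n + s + 2 := by linarith
      have : (0:ℝ) < 2 * (k:ℝ) + s + 2 := by linarith
      positivity
    have : (0:ℝ) ≤ 4 * s * n * C := by positivity
    exact mul_nonneg this (div_nonneg (mul_nonneg (hu k) (hu (k + n))) (le_of_lt hD))
  have hh_summable : Summable (fun k => (F k + F (k + n)) / 2) :=
    (hF_summable.add hFshift_summable).div_const 2
  have hg_summable : Summable g := Summable.of_nonneg_of_le hg_nonneg hkey hh_summable
  have htsum_le : ∑' k, g k ≤ ∑' k, (F k + F (k + n)) / 2 :=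
    Summable.tsum_le_tsum hkey hg_summable hh_summable
  have hsplit : ∑' k, F k = (∑ k ∈ range n, F k) + ∑' k, F (k + n) :=
    (Summable.sum_add_tsum_nat_add n hF_summable).symm
  have hhval : ∑' k, (F k + F (k + n)) / 2
      = ((∑' k, F k) + ∑' k, F (k + n)) / 2 := by
    rw [tsum_div_const, Summable.tsum_add hF_summable hFshift_summable]
  have hS0 : (0:ℝ) ≤ ∑ k ∈ range n, F k := sum_nonneg fun k _ => hF_nonneg k
  have hT0 : (0:ℝ) ≤ ∑' k, F (k + n) := tsum_nonneg fun k => hF_nonneg (k + n)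
  have hRHS : 4 * s * n * C * ∑' k : ℕ, u k * u (k + n) /
      (((k : ℝ) + n + 1) * (2 * k + 2 * n + s + 2) * (2 * k + s + 2)) = ∑' k, g k := by
    rw [hgdef, tsum_mul_left]
  rw [ge_iff_le, hRHS, sum_congr rfl hFsmall, ← tsum_congr hFshift]
  calc ∑' k, g k ≤ ∑' k, (F k + F (k + n)) / 2 := htsum_le
    _ = ((∑' k, F k) + ∑' k, F (k + n)) / 2 := hhval
    _ = ((∑ k ∈ range n, F k) + 2 * ∑' k, F (k + n)) / 2 := by rw [hsplit]; ring
    _ ≤ (∑ k ∈ range n, F k) + ∑' k, F (k + n) := by linarith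
end

section
/- Fix integers n ≥ 1 and real s > 0, and for each integer t ≥ 2 define u_k = k+1 if t ≤ k ≤ t², and u_k = 0 otherwise. Then, as t → ∞, Σ_{k=t}^{t²} n²/(k+n+1) = n² log t + O(1) and s n Σ_{k=t}^{t²−n} (k+1)/((k+n+1+s/2)(k+1+s/2)) = s n log t + O(1). Consequently, if for all t, Σ_{k=t}^{t²} n²/(k+n+1) ≥ s n C Σ_{k=t}^{t²−n} (k+1)/((k+n+1+s/2)(k+1+s/2)) holds for some constant C ≥ 0, then C ≤ n/s. -/
open Finset Real

/-! Comparing `(k + c)⁻¹` with `log (k + c + 1) - log (k + c)` and telescoping shows that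
`∑_{k=t}^{t²} (k + c)⁻¹ = log t + O(1)`. Cutting off the last `n` terms changes the sum by at most
`n`, and `(k + 1) / ((k + A) (k + B))` differs from `(k + A)⁻¹` by `(B - 1) / ((k + A) (k + B))`,
whose sum telescopes to `O(1)`; so both sums of the theorem are `(const) · log t + O(1)`. If the
first dominates `s n C` times the second for every `t`, then `(s n C - n²) log t` stays bounded,
which forces `s n C ≤ n²` because `log t` is unbounded. -/

lemma log_add_one_sub_log_le_inv {x : ℝ} (hx : 0 < x) : log (x + 1) - log x ≤ x⁻¹ := by
  rw [← log_div (by positivity) hx.ne']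
  calc log ((x + 1) / x) ≤ (x + 1) / x - 1 := log_le_sub_one_of_pos (by positivity)
    _ = x⁻¹ := by field_simp; ring

lemma inv_add_one_le_log_add_one_sub_log {x : ℝ} (hx : 0 < x) :
    (x + 1)⁻¹ ≤ log (x + 1) - log x := by
  rw [← log_div (by positivity) hx.ne']
  calc (x + 1)⁻¹ = 1 - ((x + 1) / x)⁻¹ := by field_simp; ring
    _ ≤ log ((x + 1) / x) := one_sub_inv_le_log_of_pos (by positivity)

lemma log_sub_log_le_sum_Icc_inv {c : ℝ} (hc : 0 < c) {a b : ℕ} (hab : a ≤ b) :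
    log (b + 1 + c) - log (a + c) ≤ ∑ k ∈ Icc a b, ((k : ℝ) + c)⁻¹ := by
  have htel := sum_Icc_sub hab fun k : ℕ ↦ log ((k : ℝ) + c)
  push_cast at htel
  rw [← htel]
  gcongr with k
  rw [add_right_comm]
  exact log_add_one_sub_log_le_inv (by positivity)

lemma sum_Icc_inv_le_log_sub_log {c : ℝ} {a b : ℕ} (hac : 1 < a + c) (hab : a ≤ b) :
    ∑ k ∈ Icc a b, ((k : ℝ) + c)⁻¹ ≤ log (b + c) - log (a + c - 1) := by
  have htel := sum_Icc_sub hab fun k : ℕ ↦ log ((k : ℝ) + c - 1)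
  push_cast at htel
  rw [show (b : ℝ) + 1 + c - 1 = b + c by ring] at htel
  rw [← htel]
  gcongr with k hk
  have hka : (a : ℝ) ≤ k := by exact_mod_cast (mem_Icc.mp hk).1
  calc ((k : ℝ) + c)⁻¹ = ((k + c - 1) + 1)⁻¹ := by ring_nf
    _ ≤ log ((k + c - 1) + 1) - log (k + c - 1) := inv_add_one_le_log_add_one_sub_log (by linarith)
    _ = log (k + 1 + c - 1) - log (k + c - 1) := by ring_nf

lemma abs_sum_Icc_sq_inv_sub_log_le {c : ℝ} (hc : 1 ≤ c) {t : ℕ} (ht : 1 ≤ t) :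
    |∑ k ∈ Icc t (t ^ 2), ((k : ℝ) + c)⁻¹ - log t| ≤ log (1 + c) := by
  have htt : t ≤ t ^ 2 := Nat.le_self_pow two_ne_zero t
  have ht' : (1 : ℝ) ≤ t := by exact_mod_cast ht
  have hlower := log_sub_log_le_sum_Icc_inv (by linarith) htt
  have hupper := sum_Icc_inv_le_log_sub_log (c := c) (by linarith) htt
  push_cast at hlower hupper
  have hlog_lower : log t + log (t + c) ≤ log (t ^ 2 + 1 + c) + log (1 + c) := by
    rw [← log_mul (by positivity) (by positivity), ← log_mul (by positivity) (by positivity)]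
    have : 0 ≤ (t : ℝ) * c * (t - 1) := mul_nonneg (by positivity) (by linarith)
    exact log_le_log (by positivity) (by nlinarith)
  have hlog_upper : log (t ^ 2 + c) ≤ log t + log (1 + c) + log (t + c - 1) := by
    rw [← log_mul (by positivity) (by positivity), ← log_mul (by positivity) (by linarith)]
    have h₁ : 0 ≤ (t : ℝ) * (1 + c) * (c - 1) := mul_nonneg (by positivity) (by linarith)
    have h₂ : 0 ≤ c * ((t : ℝ) ^ 2 - 1) := mul_nonneg (by linarith) (by nlinarith)
    exact log_le_log (by positivity) (by nlinarith)
  rw [abs_le]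
  constructor <;> linarith

lemma abs_sum_Icc_sub_sum_Icc_tsub_le {f : ℕ → ℝ} (hf₀ : ∀ k, 0 ≤ f k) (hf₁ : ∀ k, f k ≤ 1)
    (a b n : ℕ) : |∑ k ∈ Icc a b, f k - ∑ k ∈ Icc a (b - n), f k| ≤ n := by
  have hsub : Icc a (b - n) ⊆ Icc a b := Icc_subset_Icc_right (Nat.sub_le b n)
  rw [← sum_sdiff hsub, add_sub_cancel_right, abs_of_nonneg (sum_nonneg fun k _ ↦ hf₀ k)]
  have hcard : #(Icc a b \ Icc a (b - n)) ≤ n := by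
    rw [card_sdiff_of_subset hsub, Nat.card_Icc, Nat.card_Icc]
    omega
  calc ∑ k ∈ Icc a b \ Icc a (b - n), f k ≤ #(Icc a b \ Icc a (b - n)) • (1 : ℝ) :=
        sum_le_card_nsmul _ _ _ fun k _ ↦ hf₁ k
    _ ≤ n := by rw [nsmul_one]; exact_mod_cast hcard

lemma sum_Icc_inv_mul_le_one {A B : ℝ} (hA : 2 ≤ A) (hB : 1 ≤ B) (a b : ℕ) :
    ∑ k ∈ Icc a b, (((k : ℝ) + A) * (k + B))⁻¹ ≤ 1 := by
  have htel : ∑ k ∈ range (b + 1), (((k : ℝ) + 1)⁻¹ - ((k : ℝ) + 2)⁻¹) = 1 - ((b : ℝ) + 2)⁻¹ := by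
    have := sum_range_sub' (fun k : ℕ ↦ ((k : ℝ) + 1)⁻¹) (b + 1)
    push_cast at this
    simpa only [add_assoc, one_add_one_eq_two, zero_add, inv_one] using this
  calc ∑ k ∈ Icc a b, (((k : ℝ) + A) * (k + B))⁻¹
      ≤ ∑ k ∈ Icc a b, (((k : ℝ) + 1)⁻¹ - ((k : ℝ) + 2)⁻¹) := sum_le_sum fun k _ ↦ by
        rw [show ((k : ℝ) + 1)⁻¹ - ((k : ℝ) + 2)⁻¹ = (((k : ℝ) + 2) * (k + 1))⁻¹ by
          field_simp; ring]
        gcongr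
    _ ≤ ∑ k ∈ range (b + 1), (((k : ℝ) + 1)⁻¹ - ((k : ℝ) + 2)⁻¹) := by
        refine sum_le_sum_of_subset_of_nonneg (fun k hk ↦ ?_) fun k _ _ ↦ ?_
        · exact mem_range.mpr (Nat.lt_succ_of_le (mem_Icc.mp hk).2)
        · exact sub_nonneg.mpr (inv_anti₀ (by positivity) (by linarith))
    _ ≤ 1 := by
        rw [htel, sub_le_self_iff]
        positivity

lemma abs_sum_Icc_tsub_div_mul_sub_log_le {A B : ℝ} (hA : 2 ≤ A) (hB : 1 ≤ B) (n : ℕ) {t : ℕ}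
    (ht : 1 ≤ t) :
    |∑ k ∈ Icc t (t ^ 2 - n), ((k : ℝ) + 1) / ((k + A) * (k + B)) - log t|
      ≤ n + log (1 + A) + (B - 1) := by
  set R := ∑ k ∈ Icc t (t ^ 2 - n), (((k : ℝ) + A) * (k + B))⁻¹
  have hsplit : ∑ k ∈ Icc t (t ^ 2 - n), ((k : ℝ) + 1) / ((k + A) * (k + B))
      = ∑ k ∈ Icc t (t ^ 2 - n), ((k : ℝ) + A)⁻¹ - (B - 1) * R := by
    rw [mul_sum, ← sum_sub_distrib]
    refine sum_congr rfl fun k _ ↦ ?_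
    have : (0 : ℝ) < k + A := by positivity
    have : (0 : ℝ) < k + B := by positivity
    field_simp
    ring
  have htrunc := abs_sum_Icc_sub_sum_Icc_tsub_le (f := fun k : ℕ ↦ ((k : ℝ) + A)⁻¹)
    (fun k ↦ inv_nonneg.mpr (by positivity))
    (fun k ↦ inv_le_one_of_one_le₀ (by linarith [k.cast_nonneg (α := ℝ)])) t (t ^ 2) n
  have hlog := abs_sum_Icc_sq_inv_sub_log_le (by linarith : 1 ≤ A) ht
  have hR₀ : 0 ≤ (B - 1) * R := mul_nonneg (by linarith) (sum_nonneg fun k _ ↦ by positivity)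
  have hR₁ : (B - 1) * R ≤ B - 1 :=
    mul_le_of_le_one_right (by linarith) (sum_Icc_inv_mul_le_one hA hB _ _)
  rw [hsplit, abs_le]
  rw [abs_le] at htrunc hlog
  constructor <;> linarith [htrunc.1, htrunc.2, hlog.1, hlog.2]

lemma nonpos_of_forall_mul_log_le {d K : ℝ} (h : ∀ t : ℕ, 2 ≤ t → d * log t ≤ K) : d ≤ 0 := by
  by_contra! hd
  obtain ⟨t, hKt, ht⟩ := ((tendsto_log_atTop.comp tendsto_natCast_atTop_atTop).eventually_gt_atTop
    (K / d)).and (Filter.eventually_ge_atTop 2) |>.exists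
  have := (div_lt_iff₀' hd).mp hKt
  rw [Function.comp_apply] at this
  linarith [h t ht]

lemma mul_le_of_forall_mul_le_of_abs_sub_mul_log_le {f g : ℕ → ℝ} {a b c M N : ℝ} (hc : 0 ≤ c)
    (hf : ∀ t : ℕ, 2 ≤ t → |f t - a * log t| ≤ M) (hg : ∀ t : ℕ, 2 ≤ t → |g t - b * log t| ≤ N)
    (hfg : ∀ t : ℕ, 2 ≤ t → c * g t ≤ f t) : c * b ≤ a := by
  suffices c * b - a ≤ 0 by linarith
  refine nonpos_of_forall_mul_log_le (K := M + c * N) fun t ht ↦ ?_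
  have hf' := (abs_le.mp (hf t ht)).2
  have hg' := mul_le_mul_of_nonneg_left (abs_le.mp (hg t ht)).1 hc
  linarith [hfg t ht]

/-- With the trial sequence `u_k = k+1` for `t ≤ k ≤ t²` (and `0` otherwise):
both sums grow like a multiple of `log t` up to `O(1)`, and consequently the
hyponormality inequality for all `t` forces `C ≤ n/s`. -/
theorem stmt8 (n : ℕ) (hn : 1 ≤ n) (s : ℝ) (hs : 0 < s) :
    (∃ M : ℝ, ∀ t : ℕ, 2 ≤ t →
      |(∑ k ∈ Icc t (t ^ 2), (n : ℝ) ^ 2 / ((k : ℝ) + n + 1))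
        - (n : ℝ) ^ 2 * Real.log t| ≤ M)
    ∧ (∃ M : ℝ, ∀ t : ℕ, 2 ≤ t →
      |s * n * (∑ k ∈ Icc t (t ^ 2 - n),
          ((k : ℝ) + 1) / (((k : ℝ) + n + 1 + s / 2) * ((k : ℝ) + 1 + s / 2)))
        - s * n * Real.log t| ≤ M)
    ∧ (∀ C : ℝ, 0 ≤ C →
      (∀ t : ℕ, 2 ≤ t →
        (∑ k ∈ Icc t (t ^ 2), (n : ℝ) ^ 2 / ((k : ℝ) + n + 1))
          ≥ s * n * C * ∑ k ∈ Icc t (t ^ 2 - n),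
              ((k : ℝ) + 1) / (((k : ℝ) + n + 1 + s / 2) * ((k : ℝ) + 1 + s / 2)))
      → C ≤ n / s) := by
  have hn' : (1 : ℝ) ≤ n := by exact_mod_cast hn
  have hfirst : ∀ t : ℕ, 2 ≤ t → |(∑ k ∈ Icc t (t ^ 2), (n : ℝ) ^ 2 / ((k : ℝ) + n + 1))
      - (n : ℝ) ^ 2 * log t| ≤ n ^ 2 * log (1 + (n + 1)) := fun t ht ↦ by
    simp_rw [div_eq_mul_inv, ← mul_sum, ← mul_sub, abs_mul, abs_sq, add_assoc]
    exact mul_le_mul_of_nonneg_left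
      (abs_sum_Icc_sq_inv_sub_log_le (by linarith) (by omega)) (sq_nonneg _)
  have hsecond : ∀ t : ℕ, 2 ≤ t → |s * n * (∑ k ∈ Icc t (t ^ 2 - n),
      ((k : ℝ) + 1) / (((k : ℝ) + n + 1 + s / 2) * ((k : ℝ) + 1 + s / 2))) - s * n * log t|
      ≤ s * n * (n + log (1 + n + 1 + s / 2) + (1 + s / 2 - 1)) := fun t ht ↦ by
    have h := abs_sum_Icc_tsub_div_mul_sub_log_le (A := n + 1 + s / 2) (B := 1 + s / 2)
      (by linarith) (by linarith) n (by omega : 1 ≤ t)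
    simp only [← add_assoc] at h
    rw [← mul_sub, abs_mul, abs_of_pos (by positivity)]
    exact mul_le_mul_of_nonneg_left h (by positivity)
  refine ⟨⟨_, hfirst⟩, ⟨_, hsecond⟩, fun C hC hdom ↦ ?_⟩
  have hCsn := mul_le_of_forall_mul_le_of_abs_sub_mul_log_le hC hfirst hsecond
    fun t ht ↦ by linarith [hdom t ht]
  rw [le_div_iff₀ hs]
  nlinarith
end

section
/- Let n ≥ 1 be an integer, s > 0 real, and C > 0 real with C > n/s. Then there exists a sequence (u_k)_{k≥0} of nonnegative reals with Σ u_k²/(k+1) < ∞ such that Σ_{k=0}^{n−1} u_k²/(k+n+1) + Σ_{k=n}^∞ n² u_k²/((k+1)²(k+n+1)) < 4snC Σ_{k=0}^∞ u_k u_{k+n}/((k+n+1)(2k+2n+s+2)(2k+s+2)). -/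
/-!
Take `u` to be `k + 1` on a long block `t ≤ k < m + n` and `0` elsewhere. Then the left-hand side
is `∑_{t ≤ k < m} n² / (k + 2n + 1)` plus at most `n³` from the `n` indices at the left edge of
the block, while the right-hand side is `∑_{t ≤ k < m} 4snC (k + 1) / ((2k + 2n + s + 2)(2k + s + 2))`.
The difference of the two summands is `(snC - n²) / k + O(1 / k²)`, and `snC > n²`, so its
partial sums over `[t, m)` diverge as `m → ∞` and eventually exceed `n³`.
-/

open Finset Filter Topology

theorem tendsto_sum_Ico_atTop_of_div_succ_le {d : ℕ → ℝ} {ε : ℝ} (hε : 0 < ε) {t : ℕ}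
    (hd : ∀ k ≥ t, ε / ((k : ℝ) + 1) ≤ d k) :
    Tendsto (fun m => ∑ k ∈ Ico t m, d k) atTop atTop := by
  have harmonic : Tendsto (fun m => ε * (∑ i ∈ range m, 1 / ((i : ℝ) + 1)
      - ∑ i ∈ range t, 1 / ((i : ℝ) + 1))) atTop atTop :=
    (tendsto_atTop_add_const_right _ _ Real.tendsto_sum_range_one_div_nat_succ_atTop).const_mul_atTop
      hε
  refine tendsto_atTop_mono' atTop ?_ harmonic
  filter_upwards [eventually_ge_atTop t] with m hm
  rw [← sum_Ico_eq_sub _ hm, mul_sum]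
  exact sum_le_sum fun k hk => by simpa only [mul_one_div] using hd k (mem_Ico.1 hk).1

theorem eventually_tendsto_sum_Ico_atTop {d : ℕ → ℝ} {L : ℝ} (hL : 0 < L)
    (hd : Tendsto (fun k : ℕ => ((k : ℝ) + 1) * d k) atTop (𝓝 L)) :
    ∀ᶠ t in atTop, Tendsto (fun m => ∑ k ∈ Ico t m, d k) atTop atTop := by
  obtain ⟨T, hT⟩ := eventually_atTop.1 (hd.eventually (lt_mem_nhds (half_lt_self hL)))
  filter_upwards [eventually_ge_atTop T] with t ht
  refine tendsto_sum_Ico_atTop_of_div_succ_le (half_pos hL) fun k hk => ?_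
  rw [div_le_iff₀' (by positivity)]
  exact (hT k (ht.trans hk)).le

theorem tendsto_succ_mul_sub (x s C : ℝ) :
    Tendsto (fun k : ℕ => ((k : ℝ) + 1) *
      (4 * s * x * C * (((k : ℝ) + 1) / ((2 * k + 2 * x + s + 2) * (2 * k + s + 2)))
        - x ^ 2 / ((k : ℝ) + x + x + 1))) atTop (𝓝 (s * x * C - x ^ 2)) := by
  have h₁ := tendsto_add_mul_div_add_mul_atTop_nhds (1 : ℝ) (2 * x + s + 2) 1 two_ne_zero
  have h₂ := tendsto_add_mul_div_add_mul_atTop_nhds (1 : ℝ) (s + 2) 1 two_ne_zero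
  have h₃ := tendsto_add_mul_div_add_mul_atTop_nhds (1 : ℝ) (x + x + 1) 1 one_ne_zero
  convert ((h₁.mul h₂).const_mul (4 * s * x * C)).sub (h₃.const_mul (x ^ 2)) using 2 with k
  · rw [div_mul_div_comm]
    ring
  · ring

def blockSeq (t N k : ℕ) : ℝ := if k ∈ Ico t N then (k : ℝ) + 1 else 0

section blockSeq

variable {t N k : ℕ}

theorem blockSeq_of_mem (h : k ∈ Ico t N) : blockSeq t N k = k + 1 := if_pos h

theorem blockSeq_of_notMem (h : k ∉ Ico t N) : blockSeq t N k = 0 := if_neg h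

theorem blockSeq_nonneg : 0 ≤ blockSeq t N k := by
  unfold blockSeq; split_ifs <;> positivity

theorem blockSeq_le : blockSeq t N k ≤ k + 1 := by
  unfold blockSeq; split_ifs <;> [exact le_rfl; positivity]

end blockSeq

theorem tsum_blockSeq_mul_shift (n t m : ℕ) (w₁ w₂ : ℕ → ℝ) :
    ∑' k : ℕ, blockSeq t (m + n) k * blockSeq t (m + n) (k + n) / (((k : ℝ) + n + 1) * w₁ k * w₂ k)
      = ∑ k ∈ Ico t m, ((k : ℝ) + 1) / (w₁ k * w₂ k) := by
  rw [tsum_eq_sum (s := Ico t m) fun k hk => ?_]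
  · refine sum_congr rfl fun k hk => ?_
    rw [mem_Ico] at hk
    rw [blockSeq_of_mem (by simp only [mem_Ico]; omega),
      blockSeq_of_mem (by simp only [mem_Ico]; omega), Nat.cast_add, mul_comm, mul_assoc,
      mul_div_mul_left _ _ (by positivity)]
  · rw [mem_Ico, not_and_or, not_le, not_lt] at hk
    rcases hk with hk | hk
    · rw [blockSeq_of_notMem (by simp only [mem_Ico]; omega)]
      simp
    · rw [blockSeq_of_notMem (k := k + n) (by simp only [mem_Ico]; omega)]
      simp

theorem tsum_shift_sq_blockSeq_le {n t m : ℕ} (htm : t ≤ m) :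
    ∑' k : ℕ, (n : ℝ) ^ 2 * blockSeq t (m + n) (k + n) ^ 2 /
        (((k : ℝ) + n + 1) ^ 2 * ((k : ℝ) + n + n + 1))
      ≤ (n : ℝ) ^ 3 + ∑ k ∈ Ico t m, (n : ℝ) ^ 2 / ((k : ℝ) + n + n + 1) := by
  set f : ℕ → ℝ := fun k => (n : ℝ) ^ 2 * blockSeq t (m + n) (k + n) ^ 2 /
    (((k : ℝ) + n + 1) ^ 2 * ((k : ℝ) + n + n + 1))
  have support : ∀ k ∉ Ico (t - n) m, f k = 0 := fun k hk => by
    rw [mem_Ico, not_and_or, not_le, not_lt] at hk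
    have : blockSeq t (m + n) (k + n) = 0 := blockSeq_of_notMem (by simp only [mem_Ico]; omega)
    simp [f, this]
  have on_block : ∀ k ∈ Ico t m, f k = n ^ 2 / ((k : ℝ) + n + n + 1) := fun k hk => by
    rw [mem_Ico] at hk
    have : ((k : ℝ) + n + 1) ≠ 0 := by positivity
    simp only [f]
    rw [blockSeq_of_mem (by simp only [mem_Ico]; omega)]
    field_simp
    push_cast
    ring
  have le_sq : ∀ k, f k ≤ n ^ 2 := fun k => by
    have hu : blockSeq t (m + n) (k + n) ^ 2 ≤ ((k : ℝ) + n + 1) ^ 2 := by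
      gcongr
      · exact blockSeq_nonneg
      · exact_mod_cast blockSeq_le
    refine div_le_of_le_mul₀ (by positivity) (by positivity) ?_
    calc (n : ℝ) ^ 2 * blockSeq t (m + n) (k + n) ^ 2 ≤ n ^ 2 * ((k : ℝ) + n + 1) ^ 2 := by gcongr
      _ ≤ n ^ 2 * (((k : ℝ) + n + 1) ^ 2 * ((k : ℝ) + n + n + 1)) := by
        gcongr
        exact le_mul_of_one_le_right (by positivity) (by linarith [(k.cast_nonneg : (0 : ℝ) ≤ k)])
  rw [tsum_eq_sum support, ← sum_Ico_consecutive _ (Nat.sub_le t n) htm, sum_congr rfl on_block]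
  gcongr
  calc ∑ k ∈ Ico (t - n) t, f k ≤ #(Ico (t - n) t) • (n : ℝ) ^ 2 :=
        sum_le_card_nsmul _ _ _ fun k _ => le_sq k
    _ ≤ n • (n : ℝ) ^ 2 := by gcongr; simp only [Nat.card_Ico]; omega
    _ = n ^ 3 := by rw [nsmul_eq_mul]; ring

theorem stmt9_general (n : ℕ) (hn : 1 ≤ n) (s C : ℝ) (hs : 0 < s)
    (hC : n / s < C) :
    ∃ u : ℕ → ℝ, (∀ k, 0 ≤ u k) ∧
      Summable (fun k : ℕ => u k ^ 2 / ((k : ℝ) + 1)) ∧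
      (∑ k ∈ range n, u k ^ 2 / ((k : ℝ) + n + 1))
        + (∑' k : ℕ, (n : ℝ) ^ 2 * u (k + n) ^ 2 /
            (((k : ℝ) + n + 1) ^ 2 * ((k : ℝ) + n + n + 1)))
      < 4 * s * n * C * ∑' k : ℕ, u k * u (k + n) /
          (((k : ℝ) + n + 1) * (2 * k + 2 * n + s + 2) * (2 * k + s + 2)) := by
  have hgap : 0 < s * n * C - (n : ℝ) ^ 2 := by
    have hnC : (n : ℝ) < s * C := by rwa [div_lt_iff₀ hs, mul_comm] at hC
    have hn₀ : (0 : ℝ) < n := by exact_mod_cast hn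
    nlinarith
  obtain ⟨t, hdiv, hnt⟩ := ((eventually_tendsto_sum_Ico_atTop hgap
    (tendsto_succ_mul_sub n s C)).and (eventually_ge_atTop n)).exists
  obtain ⟨m, hm, htm⟩ := ((hdiv.eventually_gt_atTop ((n : ℝ) ^ 3)).and
    (eventually_ge_atTop t)).exists
  have head_zero : ∀ k ∈ range n, blockSeq t (m + n) k = 0 := fun k hk =>
    blockSeq_of_notMem (by simp only [mem_range, mem_Ico] at hk ⊢; omega)
  refine ⟨blockSeq t (m + n), fun k => blockSeq_nonneg,
    summable_of_ne_finset_zero (s := Ico t (m + n)) fun k hk => by simp [blockSeq_of_notMem hk], ?_⟩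
  rw [sum_eq_zero fun k hk => by simp [head_zero k hk], zero_add, tsum_blockSeq_mul_shift,
    mul_sum]
  calc _ ≤ (n : ℝ) ^ 3 + ∑ k ∈ Ico t m, (n : ℝ) ^ 2 / ((k : ℝ) + n + n + 1) :=
        tsum_shift_sq_blockSeq_le htm
    _ < _ := by rw [sum_sub_distrib] at hm; linarith

/-- For `n ≥ 1` and positive reals `s, C` with `C > n/s`, there is a nonnegative
sequence `u` with `Σ u_k²/(k+1) < ∞` violating the hyponormality inequality. -/
theorem stmt9 (n : ℕ) (hn : 1 ≤ n) (s C : ℝ) (hs : 0 < s) (hC0 : 0 < C)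
    (hC : n / s < C) :
    ∃ u : ℕ → ℝ, (∀ k, 0 ≤ u k) ∧
      Summable (fun k : ℕ => u k ^ 2 / ((k : ℝ) + 1)) ∧
      (∑ k ∈ range n, u k ^ 2 / ((k : ℝ) + n + 1))
        + (∑' k : ℕ, (n : ℝ) ^ 2 * u (k + n) ^ 2 /
            (((k : ℝ) + n + 1) ^ 2 * ((k : ℝ) + n + n + 1)))
      < 4 * s * n * C * ∑' k : ℕ, u k * u (k + n) /
          (((k : ℝ) + n + 1) * (2 * k + 2 * n + s + 2) * (2 * k + s + 2)) :=
  stmt9_general n hn s C hs hC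
end

section
/- For an integer n ≥ 1 and real s ≥ 0, define σ_k = 4(k+n+1)/(2(n+k)+s+2)² for 0 ≤ k < n and σ_k = 4(k+n+1)/(2(n+k)+s+2)² − 4(k−n+1)/(2k+s+2)² for k ≥ n. Then σ_k = n(n+s)/k³ + O(1/k⁴) as k → ∞; more precisely, there is a constant M such that |σ_k − n(n+s)/k³| ≤ M/k⁴ for all k ≥ 1. -/
open Filter Topology

noncomputable def auxP (n s t : ℝ) : ℝ :=
  (-48:ℝ)*n*s + (-24:ℝ)*n*s^2 + (-48:ℝ)*n^2 + (-48:ℝ)*n^2*s + (-16:ℝ)*n^3 + (-96:ℝ)*t*n*s + (-96:ℝ)*t*n*s^2 + (-24:ℝ)*t*n*s^3 + (-96:ℝ)*t*n^2 + (-192:ℝ)*t*n^2*s + (-72:ℝ)*t*n^2*s^2 + (-96:ℝ)*t*n^3 + (-64:ℝ)*t*n^3*s + (-16:ℝ)*t*n^4 + (-64:ℝ)*t^2*n*s + (-96:ℝ)*t^2*n*s^2 + (-48:ℝ)*t^2*n*s^3 + (-8:ℝ)*t^2*n*s^4 + (-64:ℝ)*t^2*n^2 + (-192:ℝ)*t^2*n^2*s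 + (-144:ℝ)*t^2*n^2*s^2 + (-32:ℝ)*t^2*n^2*s^3 + (-96:ℝ)*t^2*n^3 + (-128:ℝ)*t^2*n^3*s + (-40:ℝ)*t^2*n^3*s^2 + (-32:ℝ)*t^2*n^4 + (-16:ℝ)*t^2*n^4*s + (-16:ℝ)*t^3*n*s + (-32:ℝ)*t^3*n*s^2 + (-24:ℝ)*t^3*n*s^3 + (-8:ℝ)*t^3*n*s^4 + (-1:ℝ)*t^3*n*s^5 + (-16:ℝ)*t^3*n^2 + (-64:ℝ)*t^3*n^2*s + (-72:ℝ)*t^3*n^2*s^2 + (-32:ℝ)*t^3*n^2*s^3 + (-5:ℝ)*t^3*n^2*s^4 + (-32:ℝ)*t^3*n^3 + (-64:ℝ)*t^3*n^3*s + (-40:ℝ)*t^3*n^3*s^2 + (-8:ℝ)*t^3*n^3*s^3 + (-16:ℝ)*t^3*n^4 + (-16:ℝ)*t^3*n^4*s + (-4:ℝ)*t^3*n^4*s^2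

noncomputable def auxG (n s t : ℝ) : ℝ :=
  auxP n s t / ((2 + (2*n + s + 2) * t)^2 * (2 + (s + 2) * t)^2)

set_option maxHeartbeats 1000000 in
lemma aux_id (n s x : ℝ) (hn : 0 ≤ n) (hs : 0 ≤ s) (hx : 0 < x) :
    x^4 * ((4 * (x + n + 1) / (2 * (n + x) + s + 2) ^ 2
        - 4 * (x - n + 1) / (2 * x + s + 2) ^ 2) - n * (n + s) / x ^ 3)
      = auxG n s (1/x) := by
  have hd1 : (2 * (n + x) + s + 2) ≠ 0 := by positivity
  have hd2 : (2 * x + s + 2) ≠ 0 := by positivity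
  have hd3 : (2 + (2 * n + s + 2) * (1 / x)) ≠ 0 := by positivity
  have hd4 : (2 + (s + 2) * (1 / x)) ≠ 0 := by positivity
  have hx0 : x ≠ 0 := ne_of_gt hx
  unfold auxG auxP
  field_simp
  ring

lemma auxG_contAt (n s : ℝ) : ContinuousAt (auxG n s) 0 := by
  apply ContinuousAt.div (by unfold auxP; fun_prop) (by fun_prop)
  norm_num

noncomputable def auxE (n : ℕ) (s : ℝ) (k : ℕ) : ℝ :=
  (if k < n then
      4 * ((k : ℝ) + n + 1) / (2 * ((n : ℝ) + k) + s + 2) ^ 2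
    else
      4 * ((k : ℝ) + n + 1) / (2 * ((n : ℝ) + k) + s + 2) ^ 2
        - 4 * ((k : ℝ) - n + 1) / (2 * (k : ℝ) + s + 2) ^ 2)
    - (n : ℝ) * ((n : ℝ) + s) / (k : ℝ) ^ 3

/-- For `n ≥ 1` and real `s ≥ 0`, `σ_k = n(n+s)/k³ + O(1/k⁴)` as `k → ∞`. -/
theorem stmt13 (n : ℕ) (hn : 1 ≤ n) (s : ℝ) (hs : 0 ≤ s) :
    ∃ M : ℝ, ∀ k : ℕ, 1 ≤ k →
      |(if k < n then
            4 * ((k : ℝ) + n + 1) / (2 * ((n : ℝ) + k) + s + 2) ^ 2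
          else
            4 * ((k : ℝ) + n + 1) / (2 * ((n : ℝ) + k) + s + 2) ^ 2
              - 4 * ((k : ℝ) - n + 1) / (2 * (k : ℝ) + s + 2) ^ 2)
        - (n : ℝ) * ((n : ℝ) + s) / (k : ℝ) ^ 3| ≤ M / (k : ℝ) ^ 4 := by
  suffices h : ∃ M : ℝ, ∀ k : ℕ, 1 ≤ k → |auxE n s k| ≤ M / (k : ℝ) ^ 4 by
    obtain ⟨M, hM⟩ := h
    exact ⟨M, fun k hk => hM k hk⟩
  have htend : Tendsto (fun k : ℕ => (k : ℝ) ^ 4 * auxE n s k) atTop (𝓝 (auxG n s 0)) := by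
    have h1 : Tendsto (fun k : ℕ => auxG n s (1 / (k : ℝ))) atTop (𝓝 (auxG n s 0)) :=
      (auxG_contAt n s).tendsto.comp tendsto_one_div_atTop_nhds_zero_nat
    apply h1.congr'
    filter_upwards [eventually_ge_atTop (n + 1)] with k hk
    have hk0 : (0 : ℝ) < (k : ℝ) := by exact_mod_cast (by omega : 0 < k)
    have hnk : ¬ k < n := by omega
    rw [auxE, if_neg hnk,
      aux_id (n : ℝ) s (k : ℝ) (Nat.cast_nonneg n) hs hk0]
  obtain ⟨M, hM⟩ := (htend.abs).bddAbove_range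
  refine ⟨M, fun k hk => ?_⟩
  have hk0 : (0 : ℝ) < (k : ℝ) := by exact_mod_cast hk
  have hk4 : (0 : ℝ) < (k : ℝ) ^ 4 := by positivity
  rw [le_div_iff₀ hk4]
  have hMk : |(k : ℝ) ^ 4 * auxE n s k| ≤ M := hM (Set.mem_range_self k)
  calc |auxE n s k| * (k : ℝ) ^ 4 = |(k : ℝ) ^ 4 * auxE n s k| := by
        rw [abs_mul, abs_of_pos hk4]; ring
    _ ≤ M := hMk
end

section
/- For integers m, n ≥ 1 with m < n and reals s, t ≥ 0, define δ_k as: δ_k = 4(k+n+1)/((2(k+n)+s+2)(2(k+n)+t+2)) for 0 ≤ k < m, and δ_k = 4(k+n+1)/((2(k+n)+s+2)(2(k+n)+t+2)) − 4(k−m+1)/((2(k+n−m)+s+2)(2k+t+2)) for k ≥ m. Then δ_k = (mn + (ms+nt)/2)/k³ + O(1/k⁴) as k → ∞. -/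
/-!
Up to a factor 4 in numerator and denominator, each term of `δ_k` has the shape
`(k + w) / ((k + q) (k + r))` with `q, r ≥ 0`, which equals
`1/k - (q + r - w)/k² + ((q + r)(q + r - w) - qr)/k³` up to an explicit remainder
`(βk + γ) / (k³ (k + q)(k + r)) = O(1/k⁴)`. Both terms have `q + r - w = n + 1 + (s + t)/2`, so
their `1/k` and `1/k²` parts cancel and their `1/k³` coefficients differ by `mn + (ms + nt)/2`.
The finitely many `k < m` are covered by a crude bound.
-/

theorem ratio_sub_expansion_eq (q r w k : ℝ) (hk : k ≠ 0) (hkq : k + q ≠ 0) (hkr : k + r ≠ 0) :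
    (k + w) / ((k + q) * (k + r))
        - (1 / k - (q + r - w) / k ^ 2 + ((q + r) * (q + r - w) - q * r) / k ^ 3)
      = -((((q + r) * ((q + r) * (q + r - w) - q * r) - (q + r - w) * (q * r)) * k
          + ((q + r) * (q + r - w) - q * r) * (q * r)) / (k ^ 3 * ((k + q) * (k + r)))) := by
  field_simp
  ring

theorem abs_affine_div_le (β γ q r k : ℝ) (hq : 0 ≤ q) (hr : 0 ≤ r) (hk : 1 ≤ k) :
    |(β * k + γ) / (k ^ 3 * ((k + q) * (k + r)))| ≤ (|β| + |γ|) / k ^ 4 := by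
  have hk0 : 0 < k := by linarith
  have hnum : |β * k + γ| ≤ (|β| + |γ|) * k := by
    calc |β * k + γ| ≤ |β| * k + |γ| := by
          simpa [abs_mul, abs_of_pos hk0] using abs_add_le (β * k) γ
      _ ≤ (|β| + |γ|) * k := by nlinarith [abs_nonneg γ]
  have hden : k ^ 5 ≤ k ^ 3 * ((k + q) * (k + r)) := by
    have : k * k ≤ (k + q) * (k + r) := by gcongr <;> linarith
    calc k ^ 5 = k ^ 3 * (k * k) := by ring
      _ ≤ _ := by gcongr
  have hden0 : 0 < k ^ 3 * ((k + q) * (k + r)) := by positivity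
  rw [abs_div, abs_of_pos hden0]
  calc |β * k + γ| / (k ^ 3 * ((k + q) * (k + r))) ≤ (|β| + |γ|) * k / k ^ 5 := by gcongr
    _ = (|β| + |γ|) / k ^ 4 := by field_simp

theorem exists_abs_ratio_sub_expansion_le (q r w : ℝ) (hq : 0 ≤ q) (hr : 0 ≤ r) :
    ∃ C : ℝ, ∀ k : ℝ, 1 ≤ k →
      |(k + w) / ((k + q) * (k + r))
          - (1 / k - (q + r - w) / k ^ 2 + ((q + r) * (q + r - w) - q * r) / k ^ 3)|
        ≤ C / k ^ 4 := by
  refine ⟨|(q + r) * ((q + r) * (q + r - w) - q * r) - (q + r - w) * (q * r)|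
    + |((q + r) * (q + r - w) - q * r) * (q * r)|, fun k hk => ?_⟩
  rw [ratio_sub_expansion_eq q r w k (by positivity) (by positivity) (by positivity), abs_neg]
  exact abs_affine_div_le _ _ q r k hq hr hk

theorem four_mul_div_two_mul_two_mul (k w q r : ℝ) :
    4 * (k + w) / (2 * (k + q) * (2 * (k + r))) = (k + w) / ((k + q) * (k + r)) := by
  rw [show 2 * (k + q) * (2 * (k + r)) = 4 * ((k + q) * (k + r)) by ring,
    mul_div_mul_left _ _ four_ne_zero]

theorem abs_four_mul_div_le_one {x s t : ℝ} (hx : 0 ≤ x) (hs : 0 ≤ s) (ht : 0 ≤ t) :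
    |4 * (x + 1) / ((2 * x + s + 2) * (2 * x + t + 2))| ≤ 1 := by
  rw [abs_of_nonneg (by positivity), div_le_one (by positivity)]
  nlinarith [mul_nonneg hs ht]

theorem abs_le_mul_pow_div_pow {x B k m : ℝ} (hx : |x| ≤ B) (hk : 0 < k) (hkm : k ≤ m)
    (p : ℕ) : |x| ≤ B * m ^ p / k ^ p := by
  have hB : 0 ≤ B := (abs_nonneg x).trans hx
  rw [mul_div_assoc, ← div_pow]
  exact hx.trans (le_mul_of_one_le_right hB (one_le_pow₀ ((one_le_div hk).2 hkm)))

theorem abs_sub_sub_le_add {x₁ x₂ e₁ e₂ d A B : ℝ} (h₁ : |x₁ - e₁| ≤ A) (h₂ : |x₂ - e₂| ≤ B)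
    (he : e₁ - e₂ = d) : |x₁ - x₂ - d| ≤ A + B := by
  calc |x₁ - x₂ - d| = |(x₁ - e₁) - (x₂ - e₂)| := by rw [← he]; ring_nf
    _ ≤ A + B := (abs_sub _ _).trans (add_le_add h₁ h₂)

theorem stmt14_general (m n : ℕ) (hmn : m < n) (s t : ℝ) (hs : 0 ≤ s) (ht : 0 ≤ t) :
    ∃ M : ℝ, ∀ k : ℕ, 1 ≤ k →
      |(if k < m then
            4 * ((k : ℝ) + n + 1) / ((2 * ((k : ℝ) + n) + s + 2) * (2 * ((k : ℝ) + n) + t + 2))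
          else
            4 * ((k : ℝ) + n + 1) / ((2 * ((k : ℝ) + n) + s + 2) * (2 * ((k : ℝ) + n) + t + 2))
              - 4 * ((k : ℝ) - m + 1) /
                  ((2 * ((k : ℝ) + n - m) + s + 2) * (2 * (k : ℝ) + t + 2)))
        - ((m : ℝ) * n + ((m : ℝ) * s + (n : ℝ) * t) / 2) / (k : ℝ) ^ 3| ≤ M / (k : ℝ) ^ 4 := by
  have hmn' : (m : ℝ) < n := by exact_mod_cast hmn
  set c : ℝ := (m : ℝ) * n + ((m : ℝ) * s + (n : ℝ) * t) / 2
  have hc0 : 0 ≤ c := by positivity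
  obtain ⟨C₁, hC₁⟩ := exists_abs_ratio_sub_expansion_le (n + 1 + s / 2) (n + 1 + t / 2) (n + 1)
    (by positivity) (by positivity)
  obtain ⟨C₂, hC₂⟩ := exists_abs_ratio_sub_expansion_le (n - m + 1 + s / 2) (1 + t / 2) (1 - m)
    (by linarith) (by positivity)
  refine ⟨max (C₁ + C₂) ((1 + c) * m ^ 4), fun k hk => ?_⟩
  have hk1 : (1 : ℝ) ≤ k := by exact_mod_cast hk
  have hk0 : (0 : ℝ) < k := by linarith
  split_ifs with hkm
  · have hkm' : (k : ℝ) ≤ m := by exact_mod_cast hkm.le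
    have hcube : |c / (k : ℝ) ^ 3| ≤ c := by
      rw [abs_of_nonneg (by positivity)]
      exact div_le_self hc0 (one_le_pow₀ hk1)
    have hbound := (abs_sub _ _).trans
      (add_le_add (abs_four_mul_div_le_one (by positivity : (0 : ℝ) ≤ k + n) hs ht) hcube)
    exact (abs_le_mul_pow_div_pow hbound hk0 hkm' 4).trans
      (div_le_div_of_nonneg_right (le_max_right _ _) (by positivity))
  · have h₁ : 4 * ((k : ℝ) + n + 1) / ((2 * ((k : ℝ) + n) + s + 2) * (2 * ((k : ℝ) + n) + t + 2))
        = (k + (n + 1)) / ((k + (n + 1 + s / 2)) * (k + (n + 1 + t / 2))) := by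
      rw [← four_mul_div_two_mul_two_mul]; ring
    have h₂ : 4 * ((k : ℝ) - m + 1) / ((2 * ((k : ℝ) + n - m) + s + 2) * (2 * (k : ℝ) + t + 2))
        = (k + (1 - m)) / ((k + (n - m + 1 + s / 2)) * (k + (1 + t / 2))) := by
      rw [← four_mul_div_two_mul_two_mul]; ring
    rw [h₁, h₂]
    refine (abs_sub_sub_le_add (hC₁ k hk1) (hC₂ k hk1) (by ring)).trans ?_
    rw [← add_div]
    exact div_le_div_of_nonneg_right (le_max_left _ _) (by positivity)

/-- For `n > m ≥ 1` and reals `s, t ≥ 0`,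
`δ_k = (mn + (ms+nt)/2)/k³ + O(1/k⁴)` as `k → ∞`. -/
theorem stmt14 (m n : ℕ) (hm : 1 ≤ m) (hmn : m < n) (s t : ℝ) (hs : 0 ≤ s) (ht : 0 ≤ t) :
    ∃ M : ℝ, ∀ k : ℕ, 1 ≤ k →
      |(if k < m then
            4 * ((k : ℝ) + n + 1) / ((2 * ((k : ℝ) + n) + s + 2) * (2 * ((k : ℝ) + n) + t + 2))
          else
            4 * ((k : ℝ) + n + 1) / ((2 * ((k : ℝ) + n) + s + 2) * (2 * ((k : ℝ) + n) + t + 2))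
              - 4 * ((k : ℝ) - m + 1) /
                  ((2 * ((k : ℝ) + n - m) + s + 2) * (2 * (k : ℝ) + t + 2)))
        - ((m : ℝ) * n + ((m : ℝ) * s + (n : ℝ) * t) / 2) / (k : ℝ) ^ 3| ≤ M / (k : ℝ) ^ 4 :=
  stmt14_general m n hmn s t hs ht
end

section
/- Let (σ_k), (ω_k), (δ_k) be sequences of positive reals for which there exist positive constants C₋ ≤ C₊ with C₋/(k+1)³ ≤ σ_k, ω_k, δ_k ≤ C₊/(k+1)³ for all k ≥ 0, and let n > m ≥ 1 be integers. Then for every nonnegative sequence (u_k) with Σ u_k²/(k+1)³ < ∞ and every real a ≥ 0, Q(a) := a² Σ ω_k u_k² − 2a Σ δ_k u_k u_{k+n−m} + Σ σ_k u_k² ≥ (C₋ Σ u_k²/(k+1)³) · (a² − 2a C₊ (n−m+1)^{3/2}/C₋ + 1). In particular, if a² − 2a C₊ (n−m+1)^{3/2}/C₋ + 1 > 0, then Q(a) > 0 for every nonzero such (u_k). -/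
/-!
Bounding `ω` and `σ` from below by `C₋/(k+1)³` gives the terms `C₋ S a²` and `C₋ S`, where
`S = ∑ u_k²/(k+1)³`. For the cross term, `(k+d+1)³ ≤ (d+1)³ (k+1)³` with `d = n - m`, so AM-GM with
the weight `t = (d+1)^{3/2}` gives `u_k u_{k+d}/(k+1)³ ≤ (t/2) (u_k²/(k+1)³ + u_{k+d}²/(k+d+1)³)`;
summing, and bounding the shifted sum by `S`, yields `∑ δ_k u_k u_{k+d} ≤ C₊ t S`.
-/

lemma add_add_one_pow_le_mul_pow (k d p : ℕ) :
    (((k + d : ℕ) : ℝ) + 1) ^ p ≤ ((d : ℝ) + 1) ^ p * ((k : ℝ) + 1) ^ p := by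
  rw [← mul_pow]
  gcongr
  push_cast
  nlinarith [(k.cast_nonneg : (0 : ℝ) ≤ k), (d.cast_nonneg : (0 : ℝ) ≤ d)]

lemma mul_div_le_half_mul_sq_div_add_sq_div {x y A B t : ℝ} (hA : 0 < A) (hB : 0 < B)
    (ht : 0 < t) (hBA : B ≤ t ^ 2 * A) :
    x * y / A ≤ t / 2 * (x ^ 2 / A + y ^ 2 / B) := by
  have hB' : y ^ 2 / (t ^ 2 * A) ≤ y ^ 2 / B := div_le_div_of_nonneg_left (sq_nonneg y) hB hBA
  have hamgm : x * y / A ≤ t / 2 * (x ^ 2 / A + y ^ 2 / (t ^ 2 * A)) := by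
    rw [div_add_div _ _ hA.ne' (by positivity), div_le_iff₀ hA]
    field_simp
    nlinarith [sq_nonneg (t * x - y)]
  calc x * y / A ≤ t / 2 * (x ^ 2 / A + y ^ 2 / (t ^ 2 * A)) := hamgm
    _ ≤ t / 2 * (x ^ 2 / A + y ^ 2 / B) := by gcongr

section WeightedSums

variable {u : ℕ → ℝ} {p : ℕ}

lemma mul_tsum_le_tsum_mul_sq {w : ℕ → ℝ} {c C : ℝ} (hc : 0 ≤ c)
    (hw : ∀ k : ℕ, c / ((k : ℝ) + 1) ^ p ≤ w k ∧ w k ≤ C / ((k : ℝ) + 1) ^ p)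
    (hsum : Summable fun k : ℕ => u k ^ 2 / ((k : ℝ) + 1) ^ p) :
    c * ∑' k : ℕ, u k ^ 2 / ((k : ℝ) + 1) ^ p ≤ ∑' k : ℕ, w k * u k ^ 2 := by
  have hlo : ∀ k : ℕ, c * (u k ^ 2 / ((k : ℝ) + 1) ^ p) ≤ w k * u k ^ 2 := fun k =>
    (le_of_eq (by ring)).trans (mul_le_mul_of_nonneg_right (hw k).1 (sq_nonneg _))
  have hhi : ∀ k : ℕ, w k * u k ^ 2 ≤ C * (u k ^ 2 / ((k : ℝ) + 1) ^ p) := fun k =>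
    (mul_le_mul_of_nonneg_right (hw k).2 (sq_nonneg _)).trans_eq (by ring)
  have hw_sum : Summable fun k : ℕ => w k * u k ^ 2 :=
    .of_nonneg_of_le (fun k => (mul_nonneg hc (by positivity)).trans (hlo k)) hhi
      (hsum.mul_left C)
  rw [← tsum_mul_left]
  exact (hsum.mul_left c).tsum_le_tsum hlo hw_sum

lemma tsum_mul_mul_shift_le {δ : ℕ → ℝ} {C t : ℝ} (d : ℕ) (hC : 0 ≤ C) (ht : 0 < t)
    (ht2 : t ^ 2 = ((d : ℝ) + 1) ^ p) (hu : ∀ k, 0 ≤ u k) (hδ0 : ∀ k, 0 ≤ δ k)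
    (hδ : ∀ k : ℕ, δ k ≤ C / ((k : ℝ) + 1) ^ p)
    (hsum : Summable fun k : ℕ => u k ^ 2 / ((k : ℝ) + 1) ^ p) :
    ∑' k : ℕ, δ k * u k * u (k + d) ≤ C * t * ∑' k : ℕ, u k ^ 2 / ((k : ℝ) + 1) ^ p := by
  set g : ℕ → ℝ := fun k => u k ^ 2 / ((k : ℝ) + 1) ^ p
  have hg0 : ∀ k, 0 ≤ g k := fun k => by positivity
  have hpoint : ∀ k, δ k * u k * u (k + d) ≤ C * t / 2 * (g k + g (k + d)) := fun k => by
    have hshift : (((k + d : ℕ) : ℝ) + 1) ^ p ≤ t ^ 2 * ((k : ℝ) + 1) ^ p :=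
      ht2 ▸ add_add_one_pow_le_mul_pow k d p
    calc δ k * u k * u (k + d) ≤ C / ((k : ℝ) + 1) ^ p * (u k * u (k + d)) := by
          rw [mul_assoc]; exact mul_le_mul_of_nonneg_right (hδ k) (mul_nonneg (hu k) (hu _))
      _ = C * (u k * u (k + d) / ((k : ℝ) + 1) ^ p) := by ring
      _ ≤ C * (t / 2 * (g k + g (k + d))) := by
          gcongr
          exact mul_div_le_half_mul_sq_div_add_sq_div (by positivity) (by positivity) ht hshift
      _ = C * t / 2 * (g k + g (k + d)) := by ring
  have hsum_shift : Summable fun k => g (k + d) := hsum.comp_injective (add_left_injective d)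
  have hshift_le : ∑' k, g (k + d) ≤ ∑' k, g k :=
    tsum_comp_le_tsum_of_inj hsum hg0 (add_left_injective d)
  have hmaj : Summable fun k => C * t / 2 * (g k + g (k + d)) :=
    (hsum.add hsum_shift).mul_left _
  have hδ_sum : Summable fun k => δ k * u k * u (k + d) :=
    hmaj.of_nonneg_of_le (fun k => mul_nonneg (mul_nonneg (hδ0 k) (hu k)) (hu _)) hpoint
  calc ∑' k, δ k * u k * u (k + d) ≤ ∑' k, C * t / 2 * (g k + g (k + d)) :=
        hδ_sum.tsum_le_tsum hpoint hmaj
    _ = C * t / 2 * (∑' k, g k + ∑' k, g (k + d)) := by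
        rw [tsum_mul_left, hsum.tsum_add hsum_shift]
    _ ≤ C * t / 2 * (∑' k, g k + ∑' k, g k) := by gcongr
    _ = C * t * ∑' k, g k := by ring

end WeightedSums

theorem stmt15_general (m n : ℕ) (hmn : m < n)
    (σ ω δ : ℕ → ℝ) (Cm Cp : ℝ) (hCm : 0 < Cm) (hCp : Cm ≤ Cp)
    (hσ : ∀ k : ℕ, Cm / ((k : ℝ) + 1) ^ 3 ≤ σ k ∧ σ k ≤ Cp / ((k : ℝ) + 1) ^ 3)
    (hω : ∀ k : ℕ, Cm / ((k : ℝ) + 1) ^ 3 ≤ ω k ∧ ω k ≤ Cp / ((k : ℝ) + 1) ^ 3)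
    (hδ : ∀ k : ℕ, Cm / ((k : ℝ) + 1) ^ 3 ≤ δ k ∧ δ k ≤ Cp / ((k : ℝ) + 1) ^ 3)
    (u : ℕ → ℝ) (hu : ∀ k, 0 ≤ u k)
    (hsum : Summable (fun k : ℕ => u k ^ 2 / ((k : ℝ) + 1) ^ 3))
    (a : ℝ) (ha : 0 ≤ a) :
    (a ^ 2 * ∑' k : ℕ, ω k * u k ^ 2
        - 2 * a * ∑' k : ℕ, δ k * u k * u (k + (n - m))
        + ∑' k : ℕ, σ k * u k ^ 2)
      ≥ (Cm * ∑' k : ℕ, u k ^ 2 / ((k : ℝ) + 1) ^ 3)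
          * (a ^ 2 - 2 * a * Cp * (((n : ℝ) - m + 1) ^ ((3 : ℝ) / 2)) / Cm + 1)
    ∧ (0 < a ^ 2 - 2 * a * Cp * (((n : ℝ) - m + 1) ^ ((3 : ℝ) / 2)) / Cm + 1 →
        (∃ k, u k ≠ 0) →
        0 < a ^ 2 * ∑' k : ℕ, ω k * u k ^ 2
            - 2 * a * ∑' k : ℕ, δ k * u k * u (k + (n - m))
            + ∑' k : ℕ, σ k * u k ^ 2) := by
  have hbase : ((n - m : ℕ) : ℝ) + 1 = (n : ℝ) - m + 1 := by push_cast [Nat.cast_sub hmn.le]; ring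
  have hbase0 : 0 < (n : ℝ) - m + 1 := hbase ▸ by positivity
  set S := ∑' k : ℕ, u k ^ 2 / ((k : ℝ) + 1) ^ 3
  set t := ((n : ℝ) - m + 1) ^ ((3 : ℝ) / 2)
  have ht : 0 < t := Real.rpow_pos_of_pos hbase0 _
  have ht2 : t ^ 2 = ((n - m : ℕ) + 1 : ℝ) ^ 3 := by
    rw [hbase, ← Real.rpow_natCast, ← Real.rpow_mul hbase0.le]; norm_num
  have hωS := mul_tsum_le_tsum_mul_sq hCm.le hω hsum
  have hσS := mul_tsum_le_tsum_mul_sq hCm.le hσ hsum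
  have hδS := tsum_mul_mul_shift_le (n - m) (hCm.le.trans hCp) ht ht2 hu
    (fun k => (by positivity : 0 ≤ Cm / ((k : ℝ) + 1) ^ 3).trans (hδ k).1) (fun k => (hδ k).2) hsum
  have hQ : a ^ 2 * ∑' k : ℕ, ω k * u k ^ 2 - 2 * a * ∑' k : ℕ, δ k * u k * u (k + (n - m))
      + ∑' k : ℕ, σ k * u k ^ 2 ≥ Cm * S * (a ^ 2 - 2 * a * Cp * t / Cm + 1) := by
    have hexpand : Cm * S * (a ^ 2 - 2 * a * Cp * t / Cm + 1)
        = a ^ 2 * (Cm * S) - 2 * a * (Cp * t * S) + Cm * S := by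
      field_simp
    rw [hexpand]
    nlinarith [mul_le_mul_of_nonneg_left hωS (sq_nonneg a)]
  refine ⟨hQ, fun hpos ⟨k, hk⟩ => ?_⟩
  have hS : 0 < S := hsum.tsum_pos (fun k => by positivity) k (by positivity)
  exact (mul_pos (mul_pos hCm hS) hpos).trans_le hQ

/-- Lower bound for the quadratic form `Q(a)` coming from two-sided cubic-decay
bounds on the coefficient sequences, and the resulting positivity criterion. -/
theorem stmt15 (m n : ℕ) (hm : 1 ≤ m) (hmn : m < n)
    (σ ω δ : ℕ → ℝ) (Cm Cp : ℝ) (hCm : 0 < Cm) (hCp : Cm ≤ Cp)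
    (hσ : ∀ k : ℕ, Cm / ((k : ℝ) + 1) ^ 3 ≤ σ k ∧ σ k ≤ Cp / ((k : ℝ) + 1) ^ 3)
    (hω : ∀ k : ℕ, Cm / ((k : ℝ) + 1) ^ 3 ≤ ω k ∧ ω k ≤ Cp / ((k : ℝ) + 1) ^ 3)
    (hδ : ∀ k : ℕ, Cm / ((k : ℝ) + 1) ^ 3 ≤ δ k ∧ δ k ≤ Cp / ((k : ℝ) + 1) ^ 3)
    (u : ℕ → ℝ) (hu : ∀ k, 0 ≤ u k)
    (hsum : Summable (fun k : ℕ => u k ^ 2 / ((k : ℝ) + 1) ^ 3))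
    (a : ℝ) (ha : 0 ≤ a) :
    (a ^ 2 * ∑' k : ℕ, ω k * u k ^ 2
        - 2 * a * ∑' k : ℕ, δ k * u k * u (k + (n - m))
        + ∑' k : ℕ, σ k * u k ^ 2)
      ≥ (Cm * ∑' k : ℕ, u k ^ 2 / ((k : ℝ) + 1) ^ 3)
          * (a ^ 2 - 2 * a * Cp * (((n : ℝ) - m + 1) ^ ((3 : ℝ) / 2)) / Cm + 1)
    ∧ (0 < a ^ 2 - 2 * a * Cp * (((n : ℝ) - m + 1) ^ ((3 : ℝ) / 2)) / Cm + 1 →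
        (∃ k, u k ≠ 0) →
        0 < a ^ 2 * ∑' k : ℕ, ω k * u k ^ 2
            - 2 * a * ∑' k : ℕ, δ k * u k * u (k + (n - m))
            + ∑' k : ℕ, σ k * u k ^ 2) :=
  stmt15_general m n hmn σ ω δ Cm Cp hCm hCp hσ hω hδ u hu hsum a ha
end

section
/- Let m ≥ 1 be an integer, s₀, s₁ > 0 reals, and a₁ a complex number with Re(a₁) > 0. Then for every integer α ≥ m, |1/(2α+2m+2+s₀) + a₁/(2α+2m+2+s₁)|² ≥ ((α−m+1)/(α+m+1)) |1/(2α+2+s₀) + a₁/(2α+2+s₁)|². -/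
/-!
Expanding `‖p + a q‖² = p² + 2pq·Re a + q²‖a‖²` for real `p, q`, the inequality follows
term by term once `c/A² ≤ 1/A'²` and `c/B² ≤ 1/B'²`, where `c = (α-m+1)/(α+m+1)` and
`A, A'` (resp. `B, B'`) are the two denominators for `s₀` (resp. `s₁`): the cross term is
controlled by the geometric mean of these two bounds, and `Re a₁ ≥ 0` keeps its sign.
-/

lemma Complex.sq_norm_ofReal_add_mul_ofReal (p q : ℝ) (a : ℂ) :
    ‖(p : ℂ) + a * q‖ ^ 2 = p ^ 2 + 2 * (p * q) * a.re + q ^ 2 * ‖a‖ ^ 2 := by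
  rw [Complex.sq_norm, Complex.sq_norm, Complex.normSq_apply, Complex.normSq_apply]
  simp only [Complex.add_re, Complex.add_im, Complex.mul_re, Complex.mul_im,
    Complex.ofReal_re, Complex.ofReal_im]
  ring

lemma mul_mul_le_mul_of_mul_sq_le {c p q p' q' : ℝ} (hp : 0 ≤ p) (hq : 0 ≤ q)
    (hp' : 0 ≤ p') (hq' : 0 ≤ q') (h₁ : c * p ^ 2 ≤ p' ^ 2) (h₂ : c * q ^ 2 ≤ q' ^ 2) :
    c * (p * q) ≤ p' * q' := by
  rcases le_or_gt c 0 with hc | hc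
  · nlinarith [mul_nonneg hp hq, mul_nonneg hp' hq']
  · have hsq : (c * (p * q)) ^ 2 ≤ (p' * q') ^ 2 := by
      calc (c * (p * q)) ^ 2 = (c * p ^ 2) * (c * q ^ 2) := by ring
        _ ≤ p' ^ 2 * q' ^ 2 := mul_le_mul h₁ h₂ (by positivity) (sq_nonneg p')
        _ = (p' * q') ^ 2 := by ring
    exact abs_le_of_sq_le_sq' hsq (mul_nonneg hp' hq') |>.2

lemma mul_sq_norm_ofReal_add_mul_ofReal_le {c p q p' q' : ℝ} (a : ℂ) (ha : 0 ≤ a.re)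
    (hp : 0 ≤ p) (hq : 0 ≤ q) (hp' : 0 ≤ p') (hq' : 0 ≤ q')
    (h₁ : c * p ^ 2 ≤ p' ^ 2) (h₂ : c * q ^ 2 ≤ q' ^ 2) :
    c * ‖(p : ℂ) + a * q‖ ^ 2 ≤ ‖(p' : ℂ) + a * q'‖ ^ 2 := by
  have hpq := mul_mul_le_mul_of_mul_sq_le hp hq hp' hq' h₁ h₂
  rw [Complex.sq_norm_ofReal_add_mul_ofReal, Complex.sq_norm_ofReal_add_mul_ofReal]
  nlinarith [mul_le_mul_of_nonneg_right hpq ha, mul_le_mul_of_nonneg_right h₂ (sq_nonneg ‖a‖)]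

lemma sub_add_one_mul_sq_le (x m s : ℝ) (hx : 0 ≤ x) (hm : 0 ≤ m) (hs : 0 ≤ s) :
    (x - m + 1) * (2 * x + 2 * m + 2 + s) ^ 2 ≤ (x + m + 1) * (2 * x + 2 + s) ^ 2 := by
  have hdiff : (x + m + 1) * (2 * x + 2 + s) ^ 2 - (x - m + 1) * (2 * x + 2 * m + 2 + s) ^ 2
      = 2 * m * ((2 * x + 2 + s) * s + 2 * m * (x + 1 + s) + 2 * m ^ 2) := by ring
  have : 0 ≤ 2 * m * ((2 * x + 2 + s) * s + 2 * m * (x + 1 + s) + 2 * m ^ 2) := by positivity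
  linarith

lemma div_mul_one_div_sq_le (x m s : ℝ) (hx : 0 ≤ x) (hm : 0 ≤ m) (hs : 0 ≤ s) :
    (x - m + 1) / (x + m + 1) * (1 / (2 * x + 2 + s)) ^ 2
      ≤ (1 / (2 * x + 2 * m + 2 + s)) ^ 2 := by
  rw [one_div_pow, one_div_pow, mul_one_div, div_div,
    div_le_div_iff₀ (by positivity) (by positivity), one_mul]
  exact sub_add_one_mul_sq_le x m s hx hm hs

theorem stmt19_general (m : ℕ) (s₀ s₁ : ℝ) (hs₀ : 0 < s₀) (hs₁ : 0 < s₁)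
    (a₁ : ℂ) (ha : 0 < a₁.re) (α : ℕ) :
    ‖1 / ((2 * α + 2 * m + 2 + s₀ : ℝ) : ℂ)
        + a₁ / ((2 * α + 2 * m + 2 + s₁ : ℝ) : ℂ)‖ ^ 2
      ≥ (((α : ℝ) - m + 1) / ((α : ℝ) + m + 1)) *
        ‖1 / ((2 * α + 2 + s₀ : ℝ) : ℂ)
          + a₁ / ((2 * α + 2 + s₁ : ℝ) : ℂ)‖ ^ 2 := by
  have hofReal (A B : ℝ) :
      1 / (A : ℂ) + a₁ / (B : ℂ) = ((1 / A : ℝ) : ℂ) + a₁ * ((1 / B : ℝ) : ℂ) := by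
    push_cast; ring
  rw [hofReal, hofReal, ge_iff_le]
  exact mul_sq_norm_ofReal_add_mul_ofReal_le a₁ ha.le (by positivity) (by positivity)
    (by positivity) (by positivity)
    (div_mul_one_div_sq_le α m s₀ α.cast_nonneg m.cast_nonneg hs₀.le)
    (div_mul_one_div_sq_le α m s₁ α.cast_nonneg m.cast_nonneg hs₁.le)

/-- For `m ≥ 1`, positive reals `s₀, s₁`, and `a₁ ∈ ℂ` with `Re a₁ > 0`, the
hyponormality criterion for the symbol `z^m(|z|^{s₀} + a₁|z|^{s₁})` holds at
every integer `α ≥ m`. -/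
theorem stmt19 (m : ℕ) (hm : 1 ≤ m) (s₀ s₁ : ℝ) (hs₀ : 0 < s₀) (hs₁ : 0 < s₁)
    (a₁ : ℂ) (ha : 0 < a₁.re) (α : ℕ) (hα : m ≤ α) :
    ‖1 / ((2 * α + 2 * m + 2 + s₀ : ℝ) : ℂ)
        + a₁ / ((2 * α + 2 * m + 2 + s₁ : ℝ) : ℂ)‖ ^ 2
      ≥ (((α : ℝ) - m + 1) / ((α : ℝ) + m + 1)) *
        ‖1 / ((2 * α + 2 + s₀ : ℝ) : ℂ)
          + a₁ / ((2 * α + 2 + s₁ : ℝ) : ℂ)‖ ^ 2 :=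
  stmt19_general m s₀ s₁ hs₀ hs₁ a₁ ha α
end
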